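/- arXiv:2502.10184 — 3 statements merged into one kernel-verified Lean document; each statement's English description precedes it below -/
import Mathlib

section
/- Suppose the partial-label generation satisfies p(S|x, y) = C(x, S)·I(y ∈ S) for some function C: X × 2^Y → ℝ (i.e., the probability of a candidate set given (x,y) depends only on x and S whenever y ∈ S). Then for any loss L and any x, the partial-label weighted risk E_{S ~ p(S|x,y), y ~ p(y|x)} [ Σ_{j∈S} (p(y=j|x)/Σ_{k∈S} p(y=k|x)) · L(f(x), j) ] equals the ordinary risk E_{y ~ p(y|x)}[L(f(x), y)]. -/
open Finset

/-- If p(S|x,y) = C(x,S)·I(y∈S), then at any fixed instance x (with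
class posterior π and candidate-set weights C S), for any loss L, the expected
partial-label weighted loss equals the ordinary expected loss:
E_{y,S}[ Σ_{j∈S} (π j / Σ_{k∈S} π k) L j ] = Σ_y π y L y. -/
theorem partial_label_risk_rewrite (q : ℕ)
    (π : Fin q → ℝ) (hπ0 : ∀ j, 0 ≤ π j) (hπ1 : ∑ j, π j = 1)
    (C : Finset (Fin q) → ℝ) (hC0 : ∀ S, 0 ≤ C S)
    (hC1 : ∀ y : Fin q, ∑ S ∈ Finset.univ.filter (fun S : Finset (Fin q) => y ∈ S), C S = 1)
    (L : Fin q → ℝ) :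
    ∑ y : Fin q, π y *
      ∑ S ∈ Finset.univ.filter (fun S : Finset (Fin q) => y ∈ S),
        C S * ∑ j ∈ S, (π j / ∑ k ∈ S, π k) * L j
    = ∑ y : Fin q, π y * L y := by
  have key : ∀ S : Finset (Fin q),
      (∑ k ∈ S, π k) * (C S * ∑ j ∈ S, (π j / ∑ k ∈ S, π k) * L j)
      = ∑ j ∈ S, C S * (π j * L j) := by
    intro S
    by_cases hT : (∑ k ∈ S, π k) = 0
    · have hz : ∀ j ∈ S, π j = 0 := by
        intro j hj
        have := (Finset.sum_eq_zero_iff_of_nonneg (fun k _ => hπ0 k)).mp hT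
        exact this j hj
      rw [hT, zero_mul]
      exact (Finset.sum_eq_zero (fun j hj => by rw [hz j hj]; ring)).symm
    · rw [Finset.mul_sum, Finset.mul_sum]
      refine Finset.sum_congr rfl fun j hj => ?_
      field_simp

  calc ∑ y : Fin q, π y *
      ∑ S ∈ Finset.univ.filter (fun S : Finset (Fin q) => y ∈ S),
        C S * ∑ j ∈ S, (π j / ∑ k ∈ S, π k) * L j
      = ∑ y : Fin q, ∑ S : Finset (Fin q),
          if y ∈ S then π y * (C S * ∑ j ∈ S, (π j / ∑ k ∈ S, π k) * L j) else 0 := by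
        refine Finset.sum_congr rfl fun y _ => ?_
        rw [Finset.mul_sum, Finset.sum_filter]
    _ = ∑ S : Finset (Fin q), ∑ y : Fin q,
          if y ∈ S then π y * (C S * ∑ j ∈ S, (π j / ∑ k ∈ S, π k) * L j) else 0 :=
        Finset.sum_comm
    _ = ∑ S : Finset (Fin q),
          (∑ k ∈ S, π k) * (C S * ∑ j ∈ S, (π j / ∑ k ∈ S, π k) * L j) := by
        refine Finset.sum_congr rfl fun S _ => ?_
        rw [← Finset.sum_filter, Finset.filter_mem_eq_inter, Finset.univ_inter,
          ← Finset.sum_mul]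
    _ = ∑ S : Finset (Fin q), ∑ j ∈ S, C S * (π j * L j) :=
        Finset.sum_congr rfl fun S _ => key S
    _ = ∑ S : Finset (Fin q), ∑ j : Fin q,
          if j ∈ S then C S * (π j * L j) else 0 := by
        refine Finset.sum_congr rfl fun S _ => ?_
        rw [← Finset.sum_filter, Finset.filter_mem_eq_inter, Finset.univ_inter]
    _ = ∑ j : Fin q, ∑ S : Finset (Fin q),
          if j ∈ S then C S * (π j * L j) else 0 := Finset.sum_comm
    _ = ∑ j : Fin q, π j * L j := by
        refine Finset.sum_congr rfl fun j _ => ?_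
        rw [← Finset.sum_filter, ← Finset.sum_mul, hC1 j, one_mul]
end

section
/- Suppose p(S|x,y) = C(x,S)·I(y ∈ S) for some function C, and suppose the classifier output f(x) equals the true class-posterior, f_j(x) = p(y=j|x) for all j. Then the Approximated Accuracy AA(f), defined in expectation as E_{(x,S)}[ Σ_{j∈S} (f_j(x)/Σ_{k∈S} f_k(x)) · I(argmax_l f_l(x) = j) ], is statistically consistent with the expected accuracy: E[AA(f)] = ACC(f) = P(argmax_l f_l(x) = y). -/
open Finset

/-- If p(S|x,y) = C(x,S)·I(y∈S) and the classifier is calibrated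
(f_j(x) = p(y=j|x) = π x j), then the expected Approximated Accuracy equals the
expected accuracy: E[AA(f)] = ACC(f) = P(argmax_l f_l(x) = y). -/
theorem approximated_accuracy_consistency
    {X : Type*} [Fintype X] (q : ℕ)
    (pX : X → ℝ) (hpX0 : ∀ x, 0 ≤ pX x) (hpX1 : ∑ x, pX x = 1)
    (π : X → Fin q → ℝ) (hπ0 : ∀ x j, 0 ≤ π x j) (hπ1 : ∀ x, ∑ j, π x j = 1)
    (C : X → Finset (Fin q) → ℝ) (hC0 : ∀ x S, 0 ≤ C x S)
    (hC1 : ∀ x (y : Fin q),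
      ∑ S ∈ Finset.univ.filter (fun S : Finset (Fin q) => y ∈ S), C x S = 1)
    -- the classifier f equals the posterior π and predicts an argmax of it
    (pred : X → Fin q) (hpred : ∀ x j, π x j ≤ π x (pred x)) :
    -- E[AA(f)]  (expectation over x and S, with p(S|x) = C x S · Σ_{k∈S} π x k)
    (∑ x, pX x * ∑ S : Finset (Fin q),
        (C x S * ∑ k ∈ S, π x k) *
          ∑ j ∈ S, (π x j / ∑ k ∈ S, π x k) * (if pred x = j then (1 : ℝ) else 0))
    -- equals ACC(f) = P(prediction = true label)
    = ∑ x, pX x * π x (pred x) := by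
  apply Finset.sum_congr rfl
  intro x _
  congr 1
  have key : ∀ S : Finset (Fin q),
      (C x S * ∑ k ∈ S, π x k) *
        ∑ j ∈ S, (π x j / ∑ k ∈ S, π x k) * (if pred x = j then (1:ℝ) else 0)
      = (if pred x ∈ S then C x S * π x (pred x) else 0) := by
    intro S
    by_cases h : pred x ∈ S
    · simp only [h, if_true]
      have hs : ∑ j ∈ S, (π x j / ∑ k ∈ S, π x k) * (if pred x = j then (1:ℝ) else 0)
          = π x (pred x) / ∑ k ∈ S, π x k := by
        rw [Finset.sum_eq_single (pred x)]
        · simp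
        · intro b _ hb; simp [Ne.symm hb]
        · intro hb; exact absurd h hb
      rw [hs]
      by_cases hT : (∑ k ∈ S, π x k) = 0
      · have hp : π x (pred x) = 0 :=
          (Finset.sum_eq_zero_iff_of_nonneg (fun i _ => hπ0 x i)).mp hT (pred x) h
        simp [hT, hp]
      · field_simp
    · simp only [h, if_false]
      have hs : ∑ j ∈ S, (π x j / ∑ k ∈ S, π x k) * (if pred x = j then (1:ℝ) else 0) = 0 := by
        apply Finset.sum_eq_zero
        intro j hj
        have hne : pred x ≠ j := fun he => h (he ▸ hj)
        simp [hne]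
      simp [hs, h]
  rw [Finset.sum_congr rfl (fun S _ => key S), ← Finset.sum_filter, ← Finset.sum_mul,
    hC1 x (pred x), one_mul]
end

section
/- Suppose partial labels satisfy the decomposition p(S|x,y) = C(x,S)I(y∈S). Then for any bounded loss L: [0,1]^q × Y → ℝ, the ordinary classification risk E_{p(x,y)}[L(f(x), y)] equals E_{p(x,S)}[ Σ_{j∈S} w_j(x,S) L(f(x), j) ] where w_j(x,S) = p(y=j|x)/Σ_{k∈S} p(y=k|x); in particular the weights w_j(x,S) are nonnegative and sum to 1 over j ∈ S, whenever Σ_{k∈S} p(y=k|x) > 0. -/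
open Finset

/-- If p(S|x,y) = C(x,S)·I(y∈S), then for any bounded loss L the ordinary
risk E_{p(x,y)}[L(f(x),y)] equals the partial-label weighted risk
E_{p(x,S)}[Σ_{j∈S} w_j(x,S) L(f(x),j)] with w_j(x,S) = p(y=j|x)/Σ_{k∈S} p(y=k|x);
moreover, whenever Σ_{k∈S} p(y=k|x) > 0, the weights are nonnegative and sum to 1
over j ∈ S. -/
theorem risk_rewrite_with_normalized_weights
    {X : Type*} [Fintype X] (q : ℕ)
    (pX : X → ℝ) (hpX0 : ∀ x, 0 ≤ pX x) (hpX1 : ∑ x, pX x = 1)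
    (π : X → Fin q → ℝ) (hπ0 : ∀ x j, 0 ≤ π x j) (hπ1 : ∀ x, ∑ j, π x j = 1)
    (C : X → Finset (Fin q) → ℝ) (hC0 : ∀ x S, 0 ≤ C x S)
    (hC1 : ∀ x (y : Fin q),
      ∑ S ∈ Finset.univ.filter (fun S : Finset (Fin q) => y ∈ S), C x S = 1)
    (L : X → Fin q → ℝ) :
    -- ordinary risk = partial-label weighted risk (p(S|x) = C x S · Σ_{k∈S} π x k)
    (∑ x, pX x * ∑ y, π x y * L x y)
      = ∑ x, pX x * ∑ S : Finset (Fin q),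
          (C x S * ∑ k ∈ S, π x k) *
            ∑ j ∈ S, (π x j / ∑ k ∈ S, π x k) * L x j
    -- weight normalization
    ∧ (∀ x (S : Finset (Fin q)), 0 < ∑ k ∈ S, π x k →
        (∀ j ∈ S, 0 ≤ π x j / ∑ k ∈ S, π x k)
        ∧ ∑ j ∈ S, π x j / ∑ k ∈ S, π x k = 1) := by

  constructor
  · refine Finset.sum_congr rfl fun x _ => ?_
    congr 1
    have key : ∀ S : Finset (Fin q),
        (C x S * ∑ k ∈ S, π x k) * ∑ j ∈ S, (π x j / ∑ k ∈ S, π x k) * L x j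
          = C x S * ∑ j ∈ S, π x j * L x j := by
      intro S
      rcases eq_or_lt_of_le (Finset.sum_nonneg fun k _ => hπ0 x k) with h0 | hpos
      · have hz : ∀ j ∈ S, π x j = 0 := fun j hj =>
          le_antisymm (by
            have := (Finset.sum_eq_zero_iff_of_nonneg (fun k _ => hπ0 x k)).mp h0.symm
            exact le_of_eq (this j hj)) (hπ0 x j)
        have hz2 : ∑ j ∈ S, π x j * L x j = 0 :=
          Finset.sum_eq_zero fun j hj => by rw [hz j hj, zero_mul]
        rw [← h0, mul_zero, zero_mul, hz2, mul_zero]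
      · have hne : (∑ k ∈ S, π x k) ≠ 0 := ne_of_gt hpos
        rw [show (C x S * ∑ k ∈ S, π x k) * ∑ j ∈ S, (π x j / ∑ k ∈ S, π x k) * L x j
            = ∑ j ∈ S, (C x S * ∑ k ∈ S, π x k) * ((π x j / ∑ k ∈ S, π x k) * L x j)
          from Finset.mul_sum _ _ _,
          show C x S * ∑ j ∈ S, π x j * L x j = ∑ j ∈ S, C x S * (π x j * L x j)
          from Finset.mul_sum _ _ _]
        refine Finset.sum_congr rfl fun j hj => ?_
        field_simp
    calc ∑ y, π x y * L x y
        = ∑ y, (∑ S ∈ Finset.univ.filter (fun S : Finset (Fin q) => y ∈ S), C x S)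
            * (π x y * L x y) := by
          refine Finset.sum_congr rfl fun y _ => ?_
          rw [hC1 x y, one_mul]
      _ = ∑ y, ∑ S ∈ Finset.univ.filter (fun S : Finset (Fin q) => y ∈ S),
            C x S * (π x y * L x y) := by
          simp [Finset.sum_mul]
      _ = ∑ S : Finset (Fin q), ∑ y ∈ S, C x S * (π x y * L x y) := by
          rw [Finset.sum_comm' (s := Finset.univ) (t := fun y => Finset.univ.filter (fun S : Finset (Fin q) => y ∈ S)) (t' := Finset.univ) (s' := fun S => S)]
          simp
      _ = ∑ S : Finset (Fin q), C x S * ∑ j ∈ S, π x j * L x j := by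
          simp [Finset.mul_sum]
      _ = _ := by
          exact (Finset.sum_congr rfl fun S _ => (key S).symm)
  · intro x S hpos
    refine ⟨fun j hj => div_nonneg (hπ0 x j) hpos.le, ?_⟩
    rw [← Finset.sum_div, div_self (ne_of_gt hpos)]
end
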